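/- arXiv:1805.01329 — 5 statements merged into one kernel-verified Lean document; each statement's English description precedes it below -/
import Mathlib

section
/- For every n ≥ 2 and every bifurcating tree T with n leaves, if T is not isomorphic to the comb K_n, then C(T) < C(K_n); moreover C(K_n) = (n−1)(n−2)/2. Hence the comb K_n is the unique tree maximizing the Colless index on the set of bifurcating trees with n leaves. -/
/-- Rooted trees encoded as a root together with the list of subtrees
rooted at its children. -/
inductive MTree : Type
  | node : List MTree → MTree

namespace MTree

/-- Number of leaves of a tree (a single node counts as one leaf). -/
def leafCount : MTree → ℕ
  | node ts => max 1 (ts.attach.map (fun x => leafCount x.1)).sum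
decreasing_by
  have := List.sizeOf_lt_of_mem x.2
  simp only [node.sizeOf_spec]; omega

/-- `deltaF f T = Σ_{v ∈ V(T)} f (deg v)`, the `f`-size of `T`. -/
noncomputable def deltaF (f : ℕ → ℝ) : MTree → ℝ
  | node ts => f ts.length + (ts.attach.map (fun x => deltaF f x.1)).sum
decreasing_by
  have := List.sizeOf_lt_of_mem x.2
  simp only [node.sizeOf_spec]; omega

/-- The Colless-like index relative to a "dissimilarity" `D` and a function `f`:
the sum, over all internal nodes `v`, of `D` applied to the list of `f`-sizes of
the subtrees rooted at the children of `v`. -/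
noncomputable def cIndex (D : List ℝ → ℝ) (f : ℕ → ℝ) : MTree → ℝ
  | node ts => (if ts.isEmpty then 0 else D (ts.map (deltaF f)))
      + (ts.attach.map (fun x => cIndex D f x.1)).sum
decreasing_by
  have := List.sizeOf_lt_of_mem x.2
  simp only [node.sizeOf_spec]; omega

/-- The Colless index of a (bifurcating) tree: the sum over the internal nodes of the
absolute value of the difference of the numbers of leaves of the two child subtrees. -/
def colless : MTree → ℕ
  | node ts =>
      (match ts with
       | [a, b] => ((a.leafCount : ℤ) - (b.leafCount : ℤ)).natAbs
       | _ => 0)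
      + (ts.attach.map (fun x => colless x.1)).sum
decreasing_by
  have := List.sizeOf_lt_of_mem x.2
  simp only [node.sizeOf_spec]; omega

/-- The quadratic Colless index of a (bifurcating) tree. -/
def collessSq : MTree → ℕ
  | node ts =>
      (match ts with
       | [a, b] => ((a.leafCount : ℤ) - (b.leafCount : ℤ)).natAbs ^ 2
       | _ => 0)
      + (ts.attach.map (fun x => collessSq x.1)).sum
decreasing_by
  have := List.sizeOf_lt_of_mem x.2
  simp only [node.sizeOf_spec]; omega

/-- A tree in the sense of the paper: no node of out-degree 1. -/
inductive WellFormed : MTree → Prop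
  | node {ts : List MTree} : ts.length ≠ 1 → (∀ t ∈ ts, WellFormed t) →
      WellFormed (node ts)

/-- A bifurcating tree: every internal node has out-degree exactly 2. -/
inductive Bifurcating : MTree → Prop
  | node {ts : List MTree} : (ts.length = 0 ∨ ts.length = 2) →
      (∀ t ∈ ts, Bifurcating t) → Bifurcating (node ts)

/-- Isomorphism of (list-encoded) trees: the lists of child subtrees match up to
a permutation and recursively isomorphic subtrees. -/
inductive Iso : MTree → MTree → Prop
  | node {ts us vs : List MTree} :
      List.Forall₂ Iso ts vs → vs.Perm us → Iso (node ts) (node us)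

/-- A tree is fully symmetric when, for every internal node, the subtrees rooted at
its children are pairwise isomorphic. -/
inductive FullySymmetric : MTree → Prop
  | node {ts : List MTree} : (∀ s ∈ ts, ∀ t ∈ ts, Iso s t) →
      (∀ t ∈ ts, FullySymmetric t) → FullySymmetric (node ts)

/-- The comb `K_n` with `n ≥ 1` leaves. -/
def comb : ℕ → MTree
  | 0 => node []
  | 1 => node []
  | n + 2 => node [node [], comb (n + 1)]

/-- The star `FS_n`, whose root has `n` children, all of them leaves. -/
def star (n : ℕ) : MTree := node (List.replicate n (node []))

/-- The median of a list of real numbers. -/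
noncomputable def median (l : List ℝ) : ℝ :=
  let s := l.mergeSort (fun a b => a ≤ b)
  if l.length % 2 = 1 then s.getD (l.length / 2) 0
  else (s.getD (l.length / 2 - 1) 0 + s.getD (l.length / 2) 0) / 2

/-- The mean deviation from the median of a list of real numbers. -/
noncomputable def MDM (l : List ℝ) : ℝ :=
  (l.map (fun x => |x - median l|)).sum / l.length

/-- The sample variance of a list of real numbers. -/
noncomputable def svar (l : List ℝ) : ℝ :=
  (l.map (fun x => (x - l.sum / l.length) ^ 2)).sum / ((l.length : ℝ) - 1)

/-- The sample standard deviation of a list of real numbers. -/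
noncomputable def ssd (l : List ℝ) : ℝ := Real.sqrt (svar l)

end MTree

/-!
Writing the two subtrees of the root as having `x + 1` and `y + 1` leaves, the identity
`C(x + y + 1, 2) = |x - y| + C(x, 2) + C(y, 2) + (x y + 2 min(x, y))` shows that the bound
`colless T ≤ C(n - 1, 2) = (n - 1)(n - 2)/2` for `n` leaves propagates from the subtrees to
the root, and that it is attained only if one subtree is a single leaf and the other is
extremal, i.e. a comb.
-/

namespace MTree

lemma leafCount_node (ts : List MTree) :
    (node ts).leafCount = max 1 (ts.map leafCount).sum := by
  rw [leafCount, List.attach_map_val (f := leafCount)]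

lemma leafCount_pos (t : MTree) : 0 < t.leafCount := by
  cases t
  rw [leafCount_node]
  exact lt_max_of_lt_left Nat.one_pos

@[simp]
lemma leafCount_leaf : (node []).leafCount = 1 := by
  simp [leafCount_node]

@[simp]
lemma leafCount_pair (a b : MTree) : (node [a, b]).leafCount = a.leafCount + b.leafCount := by
  have := leafCount_pos a
  simp [leafCount_node]
  omega

@[simp]
lemma colless_leaf : (node []).colless = 0 := by
  simp [colless]

@[simp]
lemma colless_pair (a b : MTree) :
    (node [a, b]).colless =
      ((a.leafCount : ℤ) - b.leafCount).natAbs + (a.colless + b.colless) := by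
  simp [colless]

@[elab_as_elim]
lemma Bifurcating.leaf_pair_induction {P : MTree → Prop} {T : MTree} (hT : T.Bifurcating)
    (leaf : P (MTree.node []))
    (pair : ∀ a b, a.Bifurcating → b.Bifurcating → P a → P b → P (MTree.node [a, b])) :
    P T := by
  induction hT with
  | node hlen hts ih =>
    rcases hlen with hlen | hlen
    · rw [List.length_eq_zero_iff.mp hlen]
      exact leaf
    · obtain ⟨a, b, rfl⟩ := List.length_eq_two.mp hlen
      exact pair a b (hts a (by simp)) (hts b (by simp)) (ih a (by simp)) (ih b (by simp))

lemma Iso.leaf : Iso (MTree.node []) (MTree.node []) :=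
  .node .nil .nil

lemma Iso.pair {a a' b b' : MTree} (ha : a.Iso a') (hb : b.Iso b') :
    (MTree.node [a, b]).Iso (MTree.node [a', b']) :=
  .node (.cons ha (.cons hb .nil)) (.refl _)

lemma Iso.pair_swap {a a' b b' : MTree} (ha : a.Iso a') (hb : b.Iso b') :
    (MTree.node [a, b]).Iso (MTree.node [b', a']) :=
  .node (.cons ha (.cons hb .nil)) (.swap _ _ _)

lemma comb_add_one {n : ℕ} (hn : n ≠ 0) : comb (n + 1) = node [node [], comb n] := by
  obtain ⟨m, rfl⟩ := Nat.exists_eq_succ_of_ne_zero hn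
  rfl

lemma choose_two_add_add_one (x y : ℕ) :
    (x + y + 1).choose 2 =
      ((x : ℤ) - y).natAbs + x.choose 2 + y.choose 2 + (x * y + 2 * min x y) := by
  wlog hxy : x ≤ y generalizing x y
  · have := this y x (by omega)
    rw [add_comm x y, this, min_comm, mul_comm, ← Int.natAbs_neg, neg_sub]
    ring
  obtain ⟨d, rfl⟩ := Nat.exists_eq_add_of_le hxy
  rw [min_eq_left hxy, show ((x : ℤ) - ↑(x + d)).natAbs = d by omega]
  qify
  simp only [Nat.cast_choose_two]
  push_cast
  ring

lemma choose_two_leafCount_pair_sub_one (a b : MTree) :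
    ((node [a, b]).leafCount - 1).choose 2 =
      ((a.leafCount : ℤ) - b.leafCount).natAbs + (a.leafCount - 1).choose 2 +
        (b.leafCount - 1).choose 2 +
        ((a.leafCount - 1) * (b.leafCount - 1) + 2 * min (a.leafCount - 1) (b.leafCount - 1)) := by
  obtain ⟨x, hx⟩ := Nat.exists_eq_add_of_le' (leafCount_pos a)
  obtain ⟨y, hy⟩ := Nat.exists_eq_add_of_le' (leafCount_pos b)
  rw [leafCount_pair, hx, hy, show x + 1 + (y + 1) - 1 = x + y + 1 by omega,
    choose_two_add_add_one]
  push_cast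
  simp only [add_sub_add_right_eq_sub]

lemma leafCount_comb {n : ℕ} (hn : n ≠ 0) : (comb n).leafCount = n := by
  induction n using Nat.twoStepInduction with
  | zero => exact absurd rfl hn
  | one => exact leafCount_leaf
  | more n _ ih => rw [comb_add_one n.succ_ne_zero, leafCount_pair, ih n.succ_ne_zero]; simp; omega

lemma colless_comb (n : ℕ) : (comb n).colless = (n - 1).choose 2 := by
  induction n using Nat.twoStepInduction with
  | zero | one => exact colless_leaf
  | more n _ ih =>
    rw [comb_add_one n.succ_ne_zero, colless_pair, ih, leafCount_comb n.succ_ne_zero, colless_leaf,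
      leafCount_leaf, show n + 2 - 1 = 0 + n + 1 by omega, choose_two_add_add_one]
    simp

lemma colless_le_choose {T : MTree} (hT : T.Bifurcating) :
    T.colless ≤ (T.leafCount - 1).choose 2 := by
  refine hT.leaf_pair_induction (by simp) (fun a b _ _ iha ihb => ?_)
  rw [colless_pair, choose_two_leafCount_pair_sub_one]
  omega

lemma iso_comb_of_colless_eq {T : MTree} (hT : T.Bifurcating)
    (h : T.colless = (T.leafCount - 1).choose 2) : T.Iso (comb T.leafCount) := by
  revert h
  refine hT.leaf_pair_induction (fun _ => by rw [leafCount_leaf]; exact Iso.leaf)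
    (fun a b ha hb iha ihb h => ?_)
  have hca := colless_le_choose ha
  have hcb := colless_le_choose hb
  have ha1 := leafCount_pos a
  have hb1 := leafCount_pos b
  rw [colless_pair, choose_two_leafCount_pair_sub_one] at h
  obtain ⟨hma, hmb⟩ : a.colless = (a.leafCount - 1).choose 2 ∧
      b.colless = (b.leafCount - 1).choose 2 := by omega
  rcases show a.leafCount = 1 ∨ b.leafCount = 1 by omega with h1 | h1
  · have ha' := iha hma
    rw [h1] at ha'
    rw [leafCount_pair, h1, add_comm, comb_add_one hb1.ne']
    exact ha'.pair (ihb hmb)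
  · have hb' := ihb hmb
    rw [h1] at hb'
    rw [leafCount_pair, h1, comb_add_one ha1.ne']
    exact (iha hma).pair_swap hb'

end MTree

theorem colless_lt_colless_comb_of_not_iso_general (n : ℕ) :
    MTree.colless (MTree.comb n) = (n - 1) * (n - 2) / 2 ∧
    ∀ T : MTree, T.WellFormed → T.Bifurcating → T.leafCount = n →
      ¬ T.Iso (MTree.comb n) → T.colless < MTree.colless (MTree.comb n) := by
  refine ⟨by rw [MTree.colless_comb, Nat.choose_two_right, Nat.sub_sub], ?_⟩
  rintro T - hT rfl hni
  rw [MTree.colless_comb]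
  exact (MTree.colless_le_choose hT).lt_of_ne fun h => hni (MTree.iso_comb_of_colless_eq hT h)

/-- The comb `K_n` uniquely maximizes the Colless index among bifurcating trees with
`n ≥ 2` leaves, and its Colless index is `(n-1)(n-2)/2`. -/
theorem colless_lt_colless_comb_of_not_iso (n : ℕ) (hn : 2 ≤ n) :
    MTree.colless (MTree.comb n) = (n - 1) * (n - 2) / 2 ∧
    ∀ T : MTree, T.WellFormed → T.Bifurcating → T.leafCount = n →
      ¬ T.Iso (MTree.comb n) → T.colless < MTree.colless (MTree.comb n) :=
  colless_lt_colless_comb_of_not_iso_general n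
end

section
/- Let D be a dissimilarity and f: ℕ → ℝ≥0 a function. The Colless-like index 𝔠_{D,f} is sound if and only if δ_f(T₁) ≠ δ_f(T₂) for every pair of non-isomorphic fully symmetric trees T₁, T₂. -/
/-- A dissimilarity: a permutation-invariant nonnegative function on nonempty finite
tuples of reals which vanishes exactly on constant tuples. -/
structure Dissimilarity where
  toFun : List ℝ → ℝ
  nonneg : ∀ l : List ℝ, 0 ≤ toFun l
  perm_invariant : ∀ {l l' : List ℝ}, l.Perm l' → toFun l = toFun l'
  eq_zero_iff : ∀ l : List ℝ, l ≠ [] → (toFun l = 0 ↔ ∀ x ∈ l, ∀ y ∈ l, x = y)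

theorem List.sum_eq_zero_iff_of_nonneg {M : Type*} [AddCommMonoid M] [PartialOrder M]
    [IsOrderedAddMonoid M] {l : List M} (h : ∀ x ∈ l, 0 ≤ x) : l.sum = 0 ↔ ∀ x ∈ l, x = 0 := by
  induction l with
  | nil => simp
  | cons a l ih =>
    have htail : ∀ x ∈ l, 0 ≤ x := fun x hx => h x (List.mem_cons_of_mem _ hx)
    rw [List.sum_cons, add_eq_zero_iff_of_nonneg (h a List.mem_cons_self) (List.sum_nonneg htail),
      ih htail, List.forall_mem_cons]

namespace MTree

theorem node_induction {P : MTree → Prop}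
    (h : ∀ ts : List MTree, (∀ t ∈ ts, P t) → P (node ts)) : ∀ t, P t
  | node ts => h ts fun t _ => node_induction h t

theorem deltaF_node (f : ℕ → ℝ) (ts : List MTree) :
    deltaF f (node ts) = f ts.length + (ts.map (deltaF f)).sum := by
  rw [deltaF, List.attach_map_val (f := deltaF f)]

theorem cIndex_node (D : List ℝ → ℝ) (f : ℕ → ℝ) (ts : List MTree) :
    cIndex D f (node ts) =
      (if ts.isEmpty then 0 else D (ts.map (deltaF f))) + (ts.map (cIndex D f)).sum := by
  rw [cIndex, List.attach_map_val (f := cIndex D f)]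

theorem Iso.deltaF_eq (f : ℕ → ℝ) {t u : MTree} (h : Iso t u) : deltaF f t = deltaF f u := by
  induction t using node_induction generalizing u with
  | h ts ih =>
  obtain @⟨_, _, vs, hchildren, hperm⟩ := h
  have hmap : ts.map (deltaF f) = vs.map (deltaF f) := by
    clear hperm
    induction hchildren with
    | nil => rfl
    | cons hhead _ ihtail =>
      rw [List.map_cons, List.map_cons, ih _ List.mem_cons_self hhead,
        ihtail fun t ht => ih t (List.mem_cons_of_mem _ ht)]
  rw [deltaF_node, deltaF_node, hmap, hchildren.length_eq, hperm.length_eq,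
    (hperm.map _).sum_eq]

theorem cIndex_nonneg (D : Dissimilarity) (f : ℕ → ℝ) (t : MTree) :
    0 ≤ cIndex D.toFun f t := by
  induction t using node_induction with
  | h ts ih =>
  rw [cIndex_node]
  refine add_nonneg (by split <;> simp [D.nonneg]) (List.sum_nonneg ?_)
  simpa using ih

theorem cIndex_node_eq_zero_iff (D : Dissimilarity) (f : ℕ → ℝ) (ts : List MTree) :
    cIndex D.toFun f (node ts) = 0 ↔
      (∀ s ∈ ts, ∀ t ∈ ts, deltaF f s = deltaF f t) ∧ ∀ t ∈ ts, cIndex D.toFun f t = 0 := by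
  have hroot : (if ts.isEmpty then 0 else D.toFun (ts.map (deltaF f))) = 0 ↔
      ∀ s ∈ ts, ∀ t ∈ ts, deltaF f s = deltaF f t := by
    rcases eq_or_ne ts [] with rfl | hne
    · simp
    · rw [if_neg (by simpa using hne), D.eq_zero_iff _ (by simpa using hne)]
      simp only [List.forall_mem_map]
  rw [cIndex_node, add_eq_zero_iff_of_nonneg (by split <;> simp [D.nonneg])
      (List.sum_nonneg (by simpa using fun t _ => cIndex_nonneg D f t)),
    List.sum_eq_zero_iff_of_nonneg (by simpa using fun t _ => cIndex_nonneg D f t), hroot]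
  simp only [List.forall_mem_map]

theorem FullySymmetric.cIndex_eq_zero (D : Dissimilarity) (f : ℕ → ℝ) {t : MTree}
    (h : FullySymmetric t) : cIndex D.toFun f t = 0 := by
  induction h with
  | node hpair _ ih =>
    exact (cIndex_node_eq_zero_iff D f _).2
      ⟨fun s hs t ht => (hpair s hs t ht).deltaF_eq f, ih⟩

theorem fullySymmetric_of_cIndex_eq_zero (D : Dissimilarity) (f : ℕ → ℝ)
    (hinj : ∀ T₁ T₂ : MTree, T₁.WellFormed → T₂.WellFormed →
        T₁.FullySymmetric → T₂.FullySymmetric → ¬ T₁.Iso T₂ → deltaF f T₁ ≠ deltaF f T₂)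
    {t : MTree} (hw : WellFormed t) (hzero : cIndex D.toFun f t = 0) : FullySymmetric t := by
  induction hw with
  | @node ts _ hwts ih =>
    obtain ⟨hsizes, hchildren⟩ := (cIndex_node_eq_zero_iff D f ts).1 hzero
    have hfs : ∀ t ∈ ts, FullySymmetric t := fun t ht => ih t ht (hchildren t ht)
    refine .node (fun s hs t ht => ?_) hfs
    by_contra hniso
    exact hinj s t (hwts s hs) (hwts t ht) (hfs s hs) (hfs t ht) hniso (hsizes s hs t ht)

end MTree

theorem sound_iff_deltaF_injective_on_fullySymmetric_general
    (D : Dissimilarity) (f : ℕ → ℝ) :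
    (∀ T : MTree, T.WellFormed →
        (MTree.cIndex D.toFun f T = 0 ↔ T.FullySymmetric)) ↔
    (∀ T₁ T₂ : MTree, T₁.WellFormed → T₂.WellFormed →
        T₁.FullySymmetric → T₂.FullySymmetric → ¬ T₁.Iso T₂ →
        MTree.deltaF f T₁ ≠ MTree.deltaF f T₂) := by
  constructor
  · intro hsound T₁ T₂ hw₁ hw₂ hfs₁ hfs₂ hniso hsize
    have hw : (MTree.node [T₁, T₂]).WellFormed := .node (by simp) (by simp [hw₁, hw₂])
    have hzero : MTree.cIndex D.toFun f (.node [T₁, T₂]) = 0 :=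
      (MTree.cIndex_node_eq_zero_iff D f _).2 ⟨by simp [hsize],
        by simp [hfs₁.cIndex_eq_zero, hfs₂.cIndex_eq_zero]⟩
    obtain ⟨hpair, -⟩ := (hsound _ hw).1 hzero
    exact hniso (hpair T₁ (by simp) T₂ (by simp))
  · intro hinj T hw
    exact ⟨MTree.fullySymmetric_of_cIndex_eq_zero D f hinj hw,
      MTree.FullySymmetric.cIndex_eq_zero D f⟩

/-- `𝔠_{D,f}` is sound (i.e. it vanishes exactly on the fully symmetric trees) if and
only if `δ_f` distinguishes non-isomorphic fully symmetric trees. -/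
theorem sound_iff_deltaF_injective_on_fullySymmetric
    (D : Dissimilarity) (f : ℕ → ℝ) (hf : ∀ n, 0 ≤ f n) :
    (∀ T : MTree, T.WellFormed →
        (MTree.cIndex D.toFun f T = 0 ↔ T.FullySymmetric)) ↔
    (∀ T₁ T₂ : MTree, T₁.WellFormed → T₂.WellFormed →
        T₁.FullySymmetric → T₂.FullySymmetric → ¬ T₁.Iso T₂ →
        MTree.deltaF f T₁ ≠ MTree.deltaF f T₂) :=
  sound_iff_deltaF_injective_on_fullySymmetric_general D f
end

section
/- For all integers k, l ≥ 1 and all integers n₁,…,n_k, m₁,…,m_l ≥ 2: if n₁⋯n_k + Σ_{i=1}^{k} (n₁⋯n_{i−1})·e^{nᵢ} = m₁⋯m_l + Σ_{j=1}^{l} (m₁⋯m_{j−1})·e^{m_j} (where the empty products n₁⋯n₀ and m₁⋯m₀ equal 1), then k = l and nᵢ = mᵢ for every i. In other words, the map (n₁,…,n_k) ↦ Δ_f(n₁,…,n_k) with f(n) = eⁿ is injective on tuples of integers ≥ 2; equivalently, non-isomorphic fully symmetric trees have different eⁿ-sizes. -/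
/-!
Replacing `e` by an indeterminate `X` turns the `eⁿ`-size of `(n₁, …, n_k)` into the integer
polynomial `P(n₁, …, n_k) = X ^ n₁ + n₁ • P(n₂, …, n_k)`, `P() = 1` (`sizePoly` below). As `e`
is transcendental (Hermite's argument, on top of the analytic estimate
`LindemannWeierstrass.exp_polynomial_approx`), equal sizes force equal polynomials. The polynomial
in turn determines the tuple: its constant term is `n₁ ⋯ n_k`, the coefficient of `X ^ n_k` is at
least `n₁ ⋯ n_{k-1}` while every other non-constant coefficient is smaller, so `n_k` and then
`P(n₁, …, n_{k-1})` can be read off.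
-/

open Polynomial Finset Filter Complex
open scoped Nat Topology

lemma exists_prime_gt_mul_pow_div_factorial_lt (A c : ℝ) (m : ℕ) :
    ∃ p, p.Prime ∧ m < p ∧ A * (c ^ p / (p - 1)!) < 1 := by
  have hlim : Tendsto (fun p : ℕ ↦ A * (c * (c ^ (p - 1) / (p - 1)!))) atTop (𝓝 0) := by
    simpa using (((FloorSemiring.tendsto_pow_div_factorial_atTop c).comp
      (tendsto_sub_atTop_nat 1)).const_mul c).const_mul A
  obtain ⟨p, ⟨hmp, hlt⟩, hp⟩ := (((eventually_gt_atTop m).and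
    (hlim.eventually (gt_mem_nhds one_pos))).and_frequently
    (Nat.frequently_atTop_iff_infinite.mpr Nat.infinite_setOfPred_prime)).exists
  refine ⟨p, hp, hmp, ?_⟩
  rwa [← Nat.succ_pred_eq_of_pos (m.zero_le.trans_lt hmp), pow_succ', mul_div_assoc]

lemma natCast_succ_mem_aroots_prod (n k : ℕ) (hk : k < n) :
    ((k + 1 : ℕ) : ℂ) ∈ (∏ i ∈ range n, (X - C ((i + 1 : ℕ) : ℤ))).aroots ℂ := by
  rw [mem_aroots, Finset.prod_ne_zero_iff]
  refine ⟨fun i _ ↦ X_sub_C_ne_zero _, ?_⟩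
  rw [map_prod]
  exact prod_eq_zero (mem_range.mpr hk) (by simp)

theorem sum_intCast_mul_cexp_natCast_ne_zero (n : ℕ) (a : ℕ → ℤ) (ha : a 0 ≠ 0) :
    ∑ k ∈ range (n + 1), (a k : ℂ) * cexp k ≠ 0 := by
  intro hsum
  set f : ℤ[X] := ∏ i ∈ range n, (X - C ((i + 1 : ℕ) : ℤ))
  have hf : f.eval 0 ≠ 0 := by
    simp only [f, eval_prod, eval_sub, eval_X, eval_C, zero_sub, prod_ne_zero_iff, neg_ne_zero]
    intro i _
    positivity
  obtain ⟨c, hc⟩ := LindemannWeierstrass.exp_polynomial_approx f hf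
  obtain ⟨p, hp, hpm, hpc⟩ := exists_prime_gt_mul_pow_div_factorial_lt
    (∑ k ∈ range n, ‖(a (k + 1) : ℂ)‖) c (max (f.eval 0).natAbs (a 0).natAbs)
  obtain ⟨hpf, hpa⟩ := max_lt_iff.mp hpm
  obtain ⟨N, hpN, g, -, hg⟩ := hc p hpf hp
  -- `Z ≡ N * a 0 [ZMOD p]` is a nonzero integer, yet `Z = -∑ aₖ (N eᵏ - p g(k))` is below `1`.
  set Z : ℤ := N * a 0 + p * ∑ k ∈ range n, a (k + 1) * g.eval ((k + 1 : ℕ) : ℤ)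
  have hZ : Z ≠ 0 := by
    have hpa0 : ¬ (p : ℤ) ∣ a 0 := fun h ↦
      hpa.not_ge (Nat.le_of_dvd (Int.natAbs_pos.mpr ha) (Int.natCast_dvd.mp h))
    intro hZ
    have hdvd : (p : ℤ) ∣ N * a 0 := (dvd_add_left (dvd_mul_right _ _)).mp (hZ ▸ dvd_zero _)
    exact ((Nat.prime_iff_prime_int.mp hp).dvd_or_dvd hdvd).elim hpN hpa0
  have hZ_eq : (Z : ℂ) = -∑ k ∈ range n,
      (a (k + 1) : ℂ) * (N • cexp ((k + 1 : ℕ) : ℂ) - p • aeval ((k + 1 : ℕ) : ℂ) g) := by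
    rw [sum_range_succ'] at hsum
    have hcast : ∀ m : ℕ, ((g.eval (m : ℤ) : ℤ) : ℂ) = aeval (m : ℂ) g := fun m ↦ by
      simp [aeval_def, eval₂_eq_eval_map]
    have hsplit : ∑ k ∈ range n, (a (k + 1) : ℂ) *
        (N • cexp ((k + 1 : ℕ) : ℂ) - p • aeval ((k + 1 : ℕ) : ℂ) g) =
        N * ∑ k ∈ range n, (a (k + 1) : ℂ) * cexp ((k + 1 : ℕ) : ℂ) -
          p * ∑ k ∈ range n, (a (k + 1) : ℂ) * aeval ((k + 1 : ℕ) : ℂ) g := by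
      rw [mul_sum, mul_sum, ← sum_sub_distrib]
      exact sum_congr rfl fun _ _ ↦ by rw [zsmul_eq_mul, nsmul_eq_mul]; ring
    simp only [Nat.cast_zero, exp_zero, mul_one] at hsum
    simp only [Z, hsplit, Int.cast_add, Int.cast_mul, Int.cast_natCast, Int.cast_sum, hcast]
    linear_combination (N : ℂ) * hsum
  have hZ_lt : ‖(Z : ℂ)‖ < 1 := by
    rw [hZ_eq, norm_neg]
    refine (norm_sum_le _ _).trans_lt (lt_of_le_of_lt ?_ hpc)
    rw [sum_mul]
    refine sum_le_sum fun k hk ↦ ?_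
    rw [norm_mul]
    exact mul_le_mul_of_nonneg_left
      (hg (natCast_succ_mem_aroots_prod n k (mem_range.mp hk))) (norm_nonneg _)
  rw [norm_intCast] at hZ_lt
  exact hZ_lt.not_ge (by exact_mod_cast Int.one_le_abs hZ)

theorem transcendental_cexp_one : Transcendental ℤ (cexp 1) := by
  rw [transcendental_iff]
  intro q hq
  by_contra hq0
  obtain ⟨r, hqr, hr⟩ := exists_eq_pow_rootMultiplicity_mul_and_not_dvd q hq0 0
  rw [C_0, sub_zero] at hqr hr
  rw [X_dvd_iff] at hr
  rw [hqr, map_mul, map_pow, aeval_X, mul_eq_zero, aeval_eq_sum_range] at hq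
  refine hq.elim (pow_ne_zero _ (exp_ne_zero 1)) ?_
  simpa [zsmul_eq_mul, ← exp_nat_mul] using sum_intCast_mul_cexp_natCast_ne_zero _ _ hr

theorem transcendental_exp_one : Transcendental ℤ (Real.exp 1) :=
  (transcendental_algebraMap_iff Complex.ofReal_injective).mp <| by
    simpa using transcendental_cexp_one

noncomputable def sizePoly : List ℕ → ℤ[X]
  | [] => 1
  | n :: l => X ^ n + C (n : ℤ) * sizePoly l

lemma zero_notMem_of_forall_two_le {l : List ℕ} (hl : ∀ n ∈ l, 2 ≤ n) : 0 ∉ l :=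
  fun h ↦ by simpa using hl 0 h

namespace sizePoly

@[simp] lemma nil : sizePoly [] = 1 := rfl

@[simp] lemma cons (n : ℕ) (l : List ℕ) : sizePoly (n :: l) = X ^ n + C (n : ℤ) * sizePoly l := rfl

lemma coeff_nonneg (l : List ℕ) (v : ℕ) : 0 ≤ (sizePoly l).coeff v := by
  induction l generalizing v with
  | nil => rw [nil, coeff_one]; positivity
  | cons n l ih =>
    rw [cons, coeff_add, coeff_X_pow, coeff_C_mul]
    have := ih v
    positivity

lemma coeff_zero {l : List ℕ} (hl : 0 ∉ l) : (sizePoly l).coeff 0 = l.prod := by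
  induction l with
  | nil => simp
  | cons n l ih =>
    rw [List.mem_cons, not_or] at hl
    simp [coeff_X_pow, hl.1, ih hl.2]

lemma coeff_lt_prod {l : List ℕ} (hl : ∀ n ∈ l, 2 ≤ n) {v : ℕ} (hv : v ≠ 0) :
    (sizePoly l).coeff v < l.prod := by
  induction l with
  | nil => simp [coeff_one, hv]
  | cons n l ih =>
    rw [List.forall_mem_cons] at hl
    have hlt := ih hl.2
    have hn : (2 : ℤ) ≤ n := by exact_mod_cast hl.1
    have hind : (if v = n then 1 else 0 : ℤ) ≤ 1 := by split_ifs <;> norm_num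
    rw [cons, coeff_add, coeff_X_pow, coeff_C_mul, List.prod_cons, Nat.cast_mul]
    nlinarith

lemma append_singleton (l : List ℕ) (a : ℕ) :
    sizePoly (l ++ [a]) = sizePoly l + C (l.prod : ℤ) * (X ^ a + C ((a : ℤ) - 1)) := by
  induction l with
  | nil =>
    simp only [List.nil_append, cons, nil, List.prod_nil, Nat.cast_one, map_one, map_sub]
    ring
  | cons n l ih =>
    rw [List.cons_append, cons, cons, ih, List.prod_cons, Nat.cast_mul, C_mul]
    ring

lemma prod_le_coeff_append_singleton (l : List ℕ) {a : ℕ} (ha : a ≠ 0) :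
    (l.prod : ℤ) ≤ (sizePoly (l ++ [a])).coeff a := by
  have := coeff_nonneg l a
  rw [append_singleton, coeff_add, coeff_C_mul, coeff_add, coeff_X_pow_self, coeff_C, if_neg ha]
  linarith

lemma coeff_append_singleton_lt_prod {l : List ℕ} (hl : ∀ n ∈ l, 2 ≤ n) (a : ℕ) {v : ℕ}
    (hv : v ≠ 0) (hva : v ≠ a) : (sizePoly (l ++ [a])).coeff v < l.prod := by
  have := coeff_lt_prod hl hv
  rw [append_singleton, coeff_add, coeff_C_mul, coeff_add, coeff_X_pow, coeff_C, if_neg hva,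
    if_neg hv]
  linarith

lemma append_singleton_ne_one {l : List ℕ} (hl : 0 ∉ l) {a : ℕ} (ha : a ≠ 0) :
    sizePoly (l ++ [a]) ≠ 1 := by
  intro h
  have := prod_le_coeff_append_singleton l ha
  rw [h, coeff_one, if_neg ha] at this
  exact List.prod_ne_zero hl (by exact_mod_cast this.antisymm (Nat.cast_nonneg _))

lemma eq_of_append_singleton_eq {l m : List ℕ} (hl : ∀ n ∈ l, 2 ≤ n) (hm : ∀ n ∈ m, 2 ≤ n)
    {a b : ℕ} (ha : a ≠ 0) (hb : b ≠ 0) (h : sizePoly (l ++ [a]) = sizePoly (m ++ [b])) :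
    a = b ∧ sizePoly l = sizePoly m := by
  obtain rfl : a = b := by
    by_contra hab
    have hla := prod_le_coeff_append_singleton l ha
    have hmb := prod_le_coeff_append_singleton m hb
    have hma := coeff_append_singleton_lt_prod hm b ha hab
    have hlb := coeff_append_singleton_lt_prod hl a hb (Ne.symm hab)
    rw [h] at hla hlb
    omega
  have hprod : l.prod = m.prod := by
    have hl0 : 0 ∉ l ++ [a] := by simp [zero_notMem_of_forall_two_le hl, ha.symm]
    have hm0 : 0 ∉ m ++ [a] := by simp [zero_notMem_of_forall_two_le hm, ha.symm]
    have h0 := congr_arg (coeff · 0) h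
    simp only [coeff_zero hl0, coeff_zero hm0, List.prod_append, List.prod_singleton,
      Nat.cast_inj] at h0
    exact Nat.eq_of_mul_eq_mul_right (Nat.pos_of_ne_zero ha) h0
  rw [append_singleton, append_singleton, hprod] at h
  exact ⟨rfl, add_right_cancel h⟩

theorem injOn : Set.InjOn sizePoly {l | ∀ n ∈ l, 2 ≤ n} := by
  have of_append : ∀ {l : List ℕ} {a : ℕ}, (∀ n ∈ l ++ [a], 2 ≤ n) → (∀ n ∈ l, 2 ≤ n) ∧ a ≠ 0 :=
    fun {_ a} h ↦ ⟨fun n hn ↦ h n (by simp [hn]), by have := h a (by simp); omega⟩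
  intro ns hns ms hms h
  induction ns using List.reverseRecOn generalizing ms with
  | nil =>
    rcases ms.eq_nil_or_concat' with rfl | ⟨m, b, rfl⟩
    · rfl
    · obtain ⟨hm, hb⟩ := of_append hms
      exact absurd h.symm (append_singleton_ne_one (zero_notMem_of_forall_two_le hm) hb)
  | append_singleton l a ih =>
    obtain ⟨hl, ha⟩ := of_append hns
    rcases ms.eq_nil_or_concat' with rfl | ⟨m, b, rfl⟩
    · exact absurd h (append_singleton_ne_one (zero_notMem_of_forall_two_le hl) ha)
    obtain ⟨hm, hb⟩ := of_append hms
    obtain ⟨rfl, hlm⟩ := eq_of_append_singleton_eq hl hm ha hb h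
    rw [ih hl hm hlm]

lemma aeval_exp_one (l : List ℕ) :
    aeval (Real.exp 1) (sizePoly l) =
      l.prod + ∑ i ∈ range l.length, ((l.take i).prod : ℝ) * Real.exp (l.getD i 0) := by
  induction l with
  | nil => simp
  | cons n l ih =>
    rw [List.length_cons, sum_range_succ', cons, map_add, map_pow, map_mul, aeval_X, aeval_C,
      Real.exp_one_pow, ih]
    simp only [List.take_succ_cons, List.getD_cons_succ, List.getD_cons_zero, List.take_zero,
      List.prod_nil, List.prod_cons, Nat.cast_one, one_mul, Nat.cast_mul, algebraMap_int_eq,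
      eq_intCast, Int.cast_natCast, mul_assoc, ← mul_sum]
    ring

end sizePoly

theorem exp_size_injective_general (ns ms : List ℕ)
    (hns : ∀ i ∈ ns, 2 ≤ i) (hms : ∀ j ∈ ms, 2 ≤ j)
    (h : (ns.prod : ℝ) +
          ∑ i ∈ Finset.range ns.length, ((ns.take i).prod : ℝ) * Real.exp (ns.getD i 0) =
        (ms.prod : ℝ) +
          ∑ j ∈ Finset.range ms.length, ((ms.take j).prod : ℝ) * Real.exp (ms.getD j 0)) :
    ns = ms :=
  sizePoly.injOn hns hms <| transcendental_iff_injective.mp transcendental_exp_one <| by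
    rwa [sizePoly.aeval_exp_one, sizePoly.aeval_exp_one]

/-- Non-isomorphic fully symmetric trees have different `eⁿ`-sizes: the map
`(n₁,…,n_k) ↦ n₁⋯n_k + Σᵢ (n₁⋯n_{i-1})·e^{nᵢ}` is injective on nonempty tuples of
integers `≥ 2`. -/
theorem exp_size_injective (ns ms : List ℕ) (hnse : ns ≠ []) (hmse : ms ≠ [])
    (hns : ∀ i ∈ ns, 2 ≤ i) (hms : ∀ j ∈ ms, 2 ≤ j)
    (h : (ns.prod : ℝ) +
          ∑ i ∈ Finset.range ns.length, ((ns.take i).prod : ℝ) * Real.exp (ns.getD i 0) =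
        (ms.prod : ℝ) +
          ∑ j ∈ Finset.range ms.length, ((ms.take j).prod : ℝ) * Real.exp (ms.getD j 0)) :
    ns = ms :=
  exp_size_injective_general ns ms hns hms h
end

section
/- Let n ≥ 1 and let x₁ ≤ x₂ ≤ ⋯ ≤ x_{2n+1} be real numbers. Then (1/(2n+1)) Σ_{i=1}^{2n+1} |xᵢ − x_{n+1}| ≤ (1/(2n)) Σ_{i≠n+1} |xᵢ − (x_n + x_{n+2})/2|, i.e., removing the median entry from an odd-length sorted list does not decrease its mean deviation from the median; moreover the inequality is strict unless x₁ = x₂ = ⋯ = x_{2n+1}. -/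
/-!
Deleting the median index, the remaining indices pair up as `i ↔ i + n + 1` (`1 ≤ i ≤ n`), and
for any centre `c` between `x n` and `x (n + 2)` each pair contributes `x (i + n + 1) - x i` to
the total absolute deviation from `c`. This holds both for `c = x (n + 1)` and for
`c = (x n + x (n + 2)) / 2`, and the median term of the full sum vanishes, so both sums equal the
same `D ≥ 0`; the claim becomes `D / (2n + 1) ≤ D / (2n)`. If the entries are not all equal,
`x 1 < x (2n + 1)` and the pair `i = 1` or `i = n` straddles the gap, so `D > 0`.
-/

open Finset

lemma MonotoneOn.eq_left_of_apply_right_le {α β : Type*} [Preorder α] [PartialOrder β]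
    {f : α → β} {a b : α} (hf : MonotoneOn f (Set.Icc a b)) (hba : f b ≤ f a) {i : α}
    (hi : i ∈ Set.Icc a b) : f i = f a :=
  have hab : a ≤ b := hi.1.trans hi.2
  le_antisymm ((hf hi ⟨hab, le_rfl⟩ hi.2).trans hba) (hf ⟨le_rfl, hab⟩ hi hi.1)

lemma abs_sub_add_abs_sub_of_le_of_le {a b c : ℝ} (hac : a ≤ c) (hcb : c ≤ b) :
    |a - c| + |b - c| = b - a := by
  rw [abs_of_nonpos (sub_nonpos.2 hac), abs_of_nonneg (sub_nonneg.2 hcb)]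
  ring

lemma sum_erase_middle_Icc_eq_sum_pairs {M : Type*} [AddCommMonoid M] (n : ℕ) (f : ℕ → M) :
    ∑ i ∈ (Icc 1 (2 * n + 1)).erase (n + 1), f i = ∑ i ∈ Icc 1 n, (f i + f (i + n + 1)) := by
  have hsplit : (Icc 1 (2 * n + 1)).erase (n + 1)
      = Icc 1 n ∪ (Icc 1 n).map (addRightEmbedding (n + 1)) := by
    ext i
    simp only [map_add_right_Icc, mem_erase, mem_Icc, mem_union]
    omega
  have hdisj : Disjoint (Icc 1 n) ((Icc 1 n).map (addRightEmbedding (n + 1))) := by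
    simp only [map_add_right_Icc, disjoint_left, mem_Icc]
    omega
  rw [hsplit, sum_union hdisj, sum_map, sum_add_distrib]
  simp only [addRightEmbedding_apply, add_assoc]

section PairedDeviations

variable {n : ℕ} {x : ℕ → ℝ}

lemma sum_abs_sub_erase_middle_eq (hx : MonotoneOn x (Set.Icc 1 (2 * n + 1))) {c : ℝ}
    (hnc : x n ≤ c) (hcn : c ≤ x (n + 2)) :
    ∑ i ∈ (Icc 1 (2 * n + 1)).erase (n + 1), |x i - c|
      = ∑ i ∈ Icc 1 n, (x (i + n + 1) - x i) := by
  rw [sum_erase_middle_Icc_eq_sum_pairs]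
  refine sum_congr rfl fun i hi => ?_
  rw [mem_Icc] at hi
  have hlow : x i ≤ x n := hx ⟨hi.1, by omega⟩ ⟨hi.1.trans hi.2, by omega⟩ hi.2
  have hhigh : x (n + 2) ≤ x (i + n + 1) := hx ⟨by omega, by omega⟩ ⟨by omega, by omega⟩ (by omega)
  exact abs_sub_add_abs_sub_of_le_of_le (hlow.trans hnc) (hcn.trans hhigh)

lemma pair_gap_nonneg (hx : MonotoneOn x (Set.Icc 1 (2 * n + 1))) {i : ℕ} (hi : i ∈ Icc 1 n) :
    0 ≤ x (i + n + 1) - x i := by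
  rw [mem_Icc] at hi
  exact sub_nonneg.2 (hx ⟨hi.1, by omega⟩ ⟨by omega, by omega⟩ (by omega))

lemma sum_pair_gaps_pos (hn : 1 ≤ n) (hx : MonotoneOn x (Set.Icc 1 (2 * n + 1)))
    (hlt : x 1 < x (2 * n + 1)) :
    0 < ∑ i ∈ Icc 1 n, (x (i + n + 1) - x i) := by
  refine sum_pos' (fun i hi => pair_gap_nonneg hx hi) ?_
  rcases lt_or_ge (x 1) (x (n + 1)) with hmid | hmid
  · refine ⟨1, mem_Icc.2 ⟨le_rfl, hn⟩, ?_⟩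
    have : x (n + 1) ≤ x (1 + n + 1) :=
      hx ⟨by omega, by omega⟩ ⟨by omega, by omega⟩ (by omega)
    linarith
  · refine ⟨n, mem_Icc.2 ⟨hn, le_rfl⟩, ?_⟩
    have : x n ≤ x (n + 1) := hx ⟨hn, by omega⟩ ⟨by omega, by omega⟩ (by omega)
    rw [show n + n + 1 = 2 * n + 1 by omega]
    linarith

/-- Removing the median entry from a sorted odd-length list `x₁ ≤ ⋯ ≤ x_{2n+1}` does
not decrease the mean deviation from the median; the inequality is strict unless all
entries are equal. -/
theorem mdm_remove_median_odd (n : ℕ) (hn : 1 ≤ n) (x : ℕ → ℝ)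
    (hmono : ∀ i j, 1 ≤ i → i ≤ j → j ≤ 2 * n + 1 → x i ≤ x j) :
    (1 / (2 * n + 1 : ℝ)) * ∑ i ∈ Finset.Icc 1 (2 * n + 1), |x i - x (n + 1)| ≤
      (1 / (2 * n : ℝ)) *
        ∑ i ∈ (Finset.Icc 1 (2 * n + 1)).erase (n + 1),
          |x i - (x n + x (n + 2)) / 2| ∧
    (¬ (∀ i ∈ Finset.Icc 1 (2 * n + 1), ∀ j ∈ Finset.Icc 1 (2 * n + 1), x i = x j) →
      (1 / (2 * n + 1 : ℝ)) * ∑ i ∈ Finset.Icc 1 (2 * n + 1), |x i - x (n + 1)| <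
        (1 / (2 * n : ℝ)) *
          ∑ i ∈ (Finset.Icc 1 (2 * n + 1)).erase (n + 1),
            |x i - (x n + x (n + 2)) / 2|) := by
  have hx : MonotoneOn x (Set.Icc 1 (2 * n + 1)) := fun i hi j hj hij => hmono i j hi.1 hij hj.2
  have hn1 : x n ≤ x (n + 1) := hmono n (n + 1) hn (by omega) (by omega)
  have hn2 : x (n + 1) ≤ x (n + 2) := hmono (n + 1) (n + 2) (by omega) (by omega) (by omega)
  have hfull : ∑ i ∈ Icc 1 (2 * n + 1), |x i - x (n + 1)|
      = ∑ i ∈ Icc 1 n, (x (i + n + 1) - x i) := by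
    rw [← add_sum_erase _ _ (a := n + 1) (mem_Icc.2 ⟨by omega, by omega⟩), sub_self, abs_zero,
      zero_add]
    exact sum_abs_sub_erase_middle_eq hx hn1 hn2
  have hremoved : ∑ i ∈ (Icc 1 (2 * n + 1)).erase (n + 1), |x i - (x n + x (n + 2)) / 2|
      = ∑ i ∈ Icc 1 n, (x (i + n + 1) - x i) :=
    sum_abs_sub_erase_middle_eq hx (by linarith) (by linarith)
  have hweights : (1 : ℝ) / (2 * n + 1) < 1 / (2 * n) :=
    one_div_lt_one_div_of_lt (by positivity) (by linarith)
  rw [hfull, hremoved]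
  refine ⟨mul_le_mul_of_nonneg_right hweights.le
    (sum_nonneg fun i hi => pair_gap_nonneg hx hi), fun hne => ?_⟩
  refine mul_lt_mul_of_pos_right hweights (sum_pair_gaps_pos hn hx ?_)
  by_contra! hle
  exact hne fun i hi j hj => by
    rw [hx.eq_left_of_apply_right_le hle (Set.mem_Icc.2 (mem_Icc.1 hi)),
      hx.eq_left_of_apply_right_le hle (Set.mem_Icc.2 (mem_Icc.1 hj))]
end PairedDeviations
end

section
/- Let n ≥ 2 and let x₁ ≤ x₂ ≤ ⋯ ≤ x_{2n} be real numbers. Then (1/(2n)) Σ_{i=1}^{2n} |xᵢ − (x_n + x_{n+1})/2| ≤ (1/(2n−2)) Σ_{i∉{n,n+1}} |xᵢ − (x_{n−1} + x_{n+2})/2|, i.e., removing the two middle entries from an even-length sorted list does not decrease its mean deviation from the median; moreover the inequality is strict unless x₁ = ⋯ = x_n and x_{n+1} = ⋯ = x_{2n}. -/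
/-!
For a sorted list of even length and any centre between its two middle entries, the absolute
deviations add up to (sum of the upper half) − (sum of the lower half). Let `D` be this quantity
for the list without `x_n, x_{n+1}`, and `d = x_{n+1} - x_n`. The two sides of the inequality are
then `(D + d) / (2n)` and `D / (2n - 2)`, so the claim is `(n - 1) d ≤ D`: pair each of the
`n - 1` remaining upper entries (all `≥ x_{n+1}`) with a remaining lower entry (all `≤ x_n`).
Equality forces `x_1 = x_n` and `x_{n+1} = x_{2n}`.
-/

open Finset

section OrderedGroup

variable {ι α : Type*} [AddCommGroup α] [LinearOrder α] [IsOrderedAddMonoid α]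
  {s t : Finset ι} {f : ι → α} {a b c : α}

theorem Finset.sum_union_abs_sub_eq_sum_sub_sum [DecidableEq ι] (hst : Disjoint s t)
    (hcard : #s = #t) (hs : ∀ i ∈ s, f i ≤ c) (ht : ∀ i ∈ t, c ≤ f i) :
    ∑ i ∈ s ∪ t, |f i - c| = ∑ i ∈ t, f i - ∑ i ∈ s, f i := by
  rw [sum_union hst, sum_congr rfl fun i hi => abs_of_nonpos (sub_nonpos.2 (hs i hi)),
    sum_congr rfl fun i hi => abs_of_nonneg (sub_nonneg.2 (ht i hi)), sum_neg_distrib,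
    sum_sub_distrib, sum_sub_distrib, sum_const, sum_const, hcard]
  abel

theorem Finset.card_nsmul_sub_le_sum_sub_sum (hcard : #s = #t) (hs : ∀ i ∈ s, f i ≤ a)
    (ht : ∀ j ∈ t, b ≤ f j) : #s • (b - a) ≤ ∑ j ∈ t, f j - ∑ i ∈ s, f i := by
  rw [nsmul_sub]
  nth_rw 1 [hcard]
  exact sub_le_sub (card_nsmul_le_sum t f b ht) (sum_le_card_nsmul s f a hs)

theorem Finset.card_nsmul_sub_lt_sum_sub_sum (hcard : #s = #t) (hs : ∀ i ∈ s, f i ≤ a)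
    (ht : ∀ j ∈ t, b ≤ f j) (hlt : (∃ i ∈ s, f i < a) ∨ ∃ j ∈ t, b < f j) :
    #s • (b - a) < ∑ j ∈ t, f j - ∑ i ∈ s, f i := by
  rw [nsmul_sub]
  nth_rw 1 [hcard]
  rcases hlt with hlt | hlt
  · have hs_lt : ∑ i ∈ s, f i < #s • a := by simpa using sum_lt_sum hs hlt
    exact (sub_lt_sub_left hs_lt _).trans_le (sub_le_sub_right (card_nsmul_le_sum t f b ht) _)
  · have ht_lt : #t • b < ∑ j ∈ t, f j := by simpa using sum_lt_sum ht hlt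
    exact (sub_lt_sub_right ht_lt _).trans_le (sub_le_sub_left (sum_le_card_nsmul s f a hs) _)

theorem MonotoneOn.sum_Icc_union_Icc_abs_sub {x : ℕ → α} {p q r m : ℕ}
    (hx : MonotoneOn x (Set.Icc p m)) (hqr : q < r) (hcard : q + 1 - p = m + 1 - r)
    (hqc : x q ≤ c) (hcr : c ≤ x r) :
    ∑ i ∈ Icc p q ∪ Icc r m, |x i - c| = ∑ i ∈ Icc r m, x i - ∑ i ∈ Icc p q, x i := by
  refine sum_union_abs_sub_eq_sum_sub_sum ?_ (by simpa using hcard) ?_ ?_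
  · exact disjoint_left.2 fun i hi hi' => by
      rw [mem_Icc] at hi hi'
      omega
  · intro i hi
    rw [mem_Icc] at hi
    exact (hx ⟨hi.1, by omega⟩ ⟨by omega, by omega⟩ hi.2).trans hqc
  · intro i hi
    rw [mem_Icc] at hi
    exact hcr.trans (hx ⟨by omega, by omega⟩ ⟨by omega, hi.2⟩ hi.1)

end OrderedGroup

section Monotone

variable {ι α : Type*} [Preorder ι] [PartialOrder α] {f : ι → α} {a b i : ι}

theorem MonotoneOn.left_lt_right_of_ne_left (hf : MonotoneOn f (Set.Icc a b))
    (hi : i ∈ Set.Icc a b) (hne : f i ≠ f a) : f a < f b :=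
  (lt_of_le_of_ne (hf (Set.left_mem_Icc.2 (hi.1.trans hi.2)) hi hi.1) hne.symm).trans_le
    (hf hi (Set.right_mem_Icc.2 (hi.1.trans hi.2)) hi.2)

theorem MonotoneOn.left_lt_right_of_ne_right (hf : MonotoneOn f (Set.Icc a b))
    (hi : i ∈ Set.Icc a b) (hne : f i ≠ f b) : f a < f b :=
  (hf (Set.left_mem_Icc.2 (hi.1.trans hi.2)) hi hi.1).trans_lt
    (lt_of_le_of_ne (hf hi (Set.right_mem_Icc.2 (hi.1.trans hi.2)) hi.2) hne)

end Monotone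

section SortedEvenList

variable {n : ℕ} {x : ℕ → ℝ}

theorem sum_abs_sub_median_eq (hn : 2 ≤ n) (hx : MonotoneOn x (Set.Icc 1 (2 * n))) :
    ∑ i ∈ Icc 1 (2 * n), |x i - (x n + x (n + 1)) / 2| =
      (∑ i ∈ Icc (n + 2) (2 * n), x i - ∑ i ∈ Icc 1 (n - 1), x i) + (x (n + 1) - x n) := by
  have hmid : x n ≤ x (n + 1) := hx ⟨by omega, by omega⟩ ⟨by omega, by omega⟩ (by omega)
  have hsplit : Icc 1 (2 * n) = Icc 1 n ∪ Icc (n + 1) (2 * n) := by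
    ext i
    simp only [mem_Icc, mem_union]
    omega
  rw [hsplit, hx.sum_Icc_union_Icc_abs_sub (by omega) (by omega) (by linarith) (by linarith),
    ← insert_Icc_add_one_left_eq_Icc (by omega : n + 1 ≤ 2 * n),
    ← insert_Icc_sub_one_right_eq_Icc (by omega : 1 ≤ n), sum_insert (by simp),
    sum_insert (by rw [mem_Icc]; omega), show n + 1 + 1 = n + 2 from rfl]
  ring

theorem sum_erase_middle_abs_sub_median_eq (hn : 2 ≤ n) (hx : MonotoneOn x (Set.Icc 1 (2 * n))) :
    ∑ i ∈ ((Icc 1 (2 * n)).erase n).erase (n + 1), |x i - (x (n - 1) + x (n + 2)) / 2| =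
      ∑ i ∈ Icc (n + 2) (2 * n), x i - ∑ i ∈ Icc 1 (n - 1), x i := by
  have hgap : x (n - 1) ≤ x (n + 2) :=
    hx ⟨by omega, by omega⟩ ⟨by omega, by omega⟩ (by omega)
  have hsplit :
      ((Icc 1 (2 * n)).erase n).erase (n + 1) = Icc 1 (n - 1) ∪ Icc (n + 2) (2 * n) := by
    ext i
    simp only [mem_erase, mem_Icc, mem_union]
    omega
  rw [hsplit, hx.sum_Icc_union_Icc_abs_sub (by omega) (by omega) (by linarith) (by linarith)]

theorem sub_one_mul_sub_le_sum_sub_sum (hn : 2 ≤ n) (hx : MonotoneOn x (Set.Icc 1 (2 * n))) :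
    ((n : ℝ) - 1) * (x (n + 1) - x n) ≤
      ∑ i ∈ Icc (n + 2) (2 * n), x i - ∑ i ∈ Icc 1 (n - 1), x i := by
  have h := card_nsmul_sub_le_sum_sub_sum (s := Icc 1 (n - 1)) (t := Icc (n + 2) (2 * n))
    (f := x) (a := x n) (b := x (n + 1)) (by rw [Nat.card_Icc, Nat.card_Icc]; omega)
    (fun i hi => by
      rw [mem_Icc] at hi
      exact hx ⟨hi.1, by omega⟩ ⟨by omega, by omega⟩ (by omega))
    (fun i hi => by
      rw [mem_Icc] at hi
      exact hx ⟨by omega, by omega⟩ ⟨by omega, hi.2⟩ (by omega))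
  rwa [nsmul_eq_mul, Nat.card_Icc, Nat.add_sub_cancel, Nat.cast_pred (by omega)] at h

theorem sub_one_mul_sub_lt_sum_sub_sum (hn : 2 ≤ n) (hx : MonotoneOn x (Set.Icc 1 (2 * n)))
    (hlt : x 1 < x n ∨ x (n + 1) < x (2 * n)) :
    ((n : ℝ) - 1) * (x (n + 1) - x n) <
      ∑ i ∈ Icc (n + 2) (2 * n), x i - ∑ i ∈ Icc 1 (n - 1), x i := by
  have h := card_nsmul_sub_lt_sum_sub_sum (s := Icc 1 (n - 1)) (t := Icc (n + 2) (2 * n))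
    (f := x) (a := x n) (b := x (n + 1)) (by rw [Nat.card_Icc, Nat.card_Icc]; omega)
    (fun i hi => by
      rw [mem_Icc] at hi
      exact hx ⟨hi.1, by omega⟩ ⟨by omega, by omega⟩ (by omega))
    (fun i hi => by
      rw [mem_Icc] at hi
      exact hx ⟨by omega, by omega⟩ ⟨by omega, hi.2⟩ (by omega))
    (hlt.imp (fun h => ⟨1, by rw [mem_Icc]; omega, h⟩)
      (fun h => ⟨2 * n, by rw [mem_Icc]; omega, h⟩))
  rwa [nsmul_eq_mul, Nat.card_Icc, Nat.add_sub_cancel, Nat.cast_pred (by omega)] at h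

end SortedEvenList

/-- Removing the two middle entries from a sorted even-length list `x₁ ≤ ⋯ ≤ x_{2n}`
does not decrease the mean deviation from the median; the inequality is strict unless
`x₁ = ⋯ = x_n` and `x_{n+1} = ⋯ = x_{2n}`. -/
theorem mdm_remove_middle_even (n : ℕ) (hn : 2 ≤ n) (x : ℕ → ℝ)
    (hmono : ∀ i j, 1 ≤ i → i ≤ j → j ≤ 2 * n → x i ≤ x j) :
    (1 / (2 * n : ℝ)) *
        ∑ i ∈ Finset.Icc 1 (2 * n), |x i - (x n + x (n + 1)) / 2| ≤
      (1 / (2 * n - 2 : ℝ)) *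
        ∑ i ∈ ((Finset.Icc 1 (2 * n)).erase n).erase (n + 1),
          |x i - (x (n - 1) + x (n + 2)) / 2| ∧
    (¬ ((∀ i ∈ Finset.Icc 1 n, x i = x 1) ∧
          (∀ i ∈ Finset.Icc (n + 1) (2 * n), x i = x (2 * n))) →
      (1 / (2 * n : ℝ)) *
          ∑ i ∈ Finset.Icc 1 (2 * n), |x i - (x n + x (n + 1)) / 2| <
        (1 / (2 * n - 2 : ℝ)) *
          ∑ i ∈ ((Finset.Icc 1 (2 * n)).erase n).erase (n + 1),
            |x i - (x (n - 1) + x (n + 2)) / 2|) := by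
  have hx : MonotoneOn x (Set.Icc 1 (2 * n)) := fun i hi j hj hij => hmono i j hi.1 hij hj.2
  have hends :
      ¬((∀ i ∈ Icc 1 n, x i = x 1) ∧ ∀ i ∈ Icc (n + 1) (2 * n), x i = x (2 * n)) →
        x 1 < x n ∨ x (n + 1) < x (2 * n) := by
    rw [not_and_or]
    rintro (h | h) <;> push Not at h <;> obtain ⟨i, hi, hne⟩ := h
    · exact .inl <| (hx.mono (Set.Icc_subset_Icc le_rfl (by omega))).left_lt_right_of_ne_left
        (mem_Icc.1 hi) hne
    · exact .inr <| (hx.mono (Set.Icc_subset_Icc (by omega) le_rfl)).left_lt_right_of_ne_right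
        (mem_Icc.1 hi) hne
  have hpos : (0 : ℝ) < 2 * n - 2 := by
    have : (2 : ℝ) ≤ n := by exact_mod_cast hn
    linarith
  rw [sum_abs_sub_median_eq hn hx, sum_erase_middle_abs_sub_median_eq hn hx, one_div_mul_eq_div,
    one_div_mul_eq_div, div_le_div_iff₀ (by linarith) hpos, div_lt_div_iff₀ (by linarith) hpos]
  exact ⟨by linarith [sub_one_mul_sub_le_sum_sub_sum hn hx],
    fun h => by linarith [sub_one_mul_sub_lt_sum_sub_sum hn hx (hends h)]⟩
end
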